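/- Suppose strict feasibility fails for the nonempty spectrahedron F = {X ⪰ 0 : A(X) = b} (there is no X ≻ 0 with A(X) = b), and let X = V D Vᵀ ∈ F where V has orthonormal columns and D ≻ 0 is diagonal. Then for any solution λ of the auxiliary system one has ∑_{i=1}^{m} λᵢ Aᵢ V = 0; in particular, the matrices A₁V, …, AₘV are linearly dependent. -/

import Mathlib

/-!
Write `S = ∑ᵢ λᵢ Aᵢ` and `X = V D Vᵀ = W Wᵀ` with `W = V D^{1/2}`. Since `A X = b`,
`tr (Wᵀ S W) = tr (S X) = ⟨b, λ⟩ = 0`, and a positive semidefinite `S = Bᵀ B` can only have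
`tr ((B W)ᵀ (B W)) = 0` if `B W = 0`; hence `S W = 0`, and `S V = 0` because `D^{1/2}` is invertible.
A nontrivial combination of the `Aᵢ V` thus vanishes, as `S ≠ 0` forces `λ ≠ 0`.
-/

open Matrix Set

noncomputable section

/-- The linear map `A X = (⟨Aᵢ, X⟩)ᵢ` (trace inner product). -/
def calA {n m : ℕ} (A : Fin m → Matrix (Fin n) (Fin n) ℝ)
    (X : Matrix (Fin n) (Fin n) ℝ) : Fin m → ℝ := fun i => (A i * X).trace

/-- The adjoint map `A* λ = ∑ᵢ λᵢ Aᵢ`. -/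
def adjA {n m : ℕ} (A : Fin m → Matrix (Fin n) (Fin n) ℝ) (lam : Fin m → ℝ) :
    Matrix (Fin n) (Fin n) ℝ := ∑ i, lam i • A i

/-- The spectrahedron `F = {X ⪰ 0 : A X = b}`. -/
def spectra {n m : ℕ} (A : Fin m → Matrix (Fin n) (Fin n) ℝ) (b : Fin m → ℝ) :
    Set (Matrix (Fin n) (Fin n) ℝ) := {X | X.PosSemidef ∧ calA A X = b}

open scoped ComplexOrder MatrixOrder in
theorem Matrix.PosSemidef.mul_eq_zero_of_trace_conjTranspose_mul_mul_eq_zero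
    {𝕜 ι κ : Type*} [RCLike 𝕜] [Fintype ι] [Fintype κ] {S : Matrix ι ι 𝕜}
    (hS : S.PosSemidef) {W : Matrix ι κ 𝕜} (h : (Wᴴ * S * W).trace = 0) : S * W = 0 := by
  classical
  obtain ⟨B, rfl⟩ := CStarAlgebra.nonneg_iff_eq_star_mul_self.mp hS.nonneg
  rw [star_eq_conjTranspose, ← Matrix.mul_assoc, Matrix.mul_assoc _ B, ← conjTranspose_mul,
    trace_conjTranspose_mul_self_eq_zero_iff] at h
  rw [Matrix.mul_assoc, h, Matrix.mul_zero]

theorem Matrix.mul_eq_zero_of_mul_mul_diagonal_eq_zero {R ι κ : Type*} [Field R] [Fintype ι]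
    [Fintype κ] [DecidableEq κ] {S : Matrix ι ι R} {V : Matrix ι κ R} {e : κ → R}
    (he : ∀ k, e k ≠ 0) (h : S * (V * diagonal e) = 0) : S * V = 0 := by
  have hV : V = V * diagonal e * diagonal e⁻¹ := by
    rw [Matrix.mul_assoc, diagonal_mul_diagonal]
    simp [mul_inv_cancel₀ (he _)]
  rw [hV, ← Matrix.mul_assoc, ← Matrix.mul_assoc, Matrix.mul_assoc S, h, Matrix.zero_mul]

theorem Matrix.mul_diagonal_mul_transpose_eq_of_nonneg {ι κ : Type*} [Fintype κ] [DecidableEq κ]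
    (V : Matrix ι κ ℝ) {d : κ → ℝ} (hd : ∀ k, 0 ≤ d k) :
    V * diagonal d * Vᵀ =
      V * diagonal (fun k => √(d k)) * (V * diagonal (fun k => √(d k)))ᵀ := by
  rw [transpose_mul, diagonal_transpose, Matrix.mul_assoc, Matrix.mul_assoc V,
    ← Matrix.mul_assoc (diagonal _), diagonal_mul_diagonal]
  simp_rw [Real.mul_self_sqrt (hd _)]

theorem trace_adjA_mul {n m : ℕ} (A : Fin m → Matrix (Fin n) (Fin n) ℝ) (lam : Fin m → ℝ)
    (X : Matrix (Fin n) (Fin n) ℝ) : (adjA A lam * X).trace = ∑ i, lam i * calA A X i := by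
  simp [adjA, calA, Finset.sum_mul, trace_sum]

theorem adjA_mul {n m r : ℕ} (A : Fin m → Matrix (Fin n) (Fin n) ℝ) (lam : Fin m → ℝ)
    (V : Matrix (Fin n) (Fin r) ℝ) : adjA A lam * V = ∑ i, lam i • (A i * V) := by
  simp [adjA, Matrix.sum_mul]

theorem stmt10_general {n m r : ℕ} (A : Fin m → Matrix (Fin n) (Fin n) ℝ) (b : Fin m → ℝ)
    (V : Matrix (Fin n) (Fin r) ℝ)
    (d : Fin r → ℝ) (hd : ∀ i, 0 < d i)
    (hXF : V * Matrix.diagonal d * Vᵀ ∈ spectra A b)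
    (lam : Fin m → ℝ) (hlam0 : adjA A lam ≠ 0)
    (hlampsd : (adjA A lam).PosSemidef) (hblam : ∑ i, b i * lam i = 0) :
    (∑ i, lam i • (A i * V)) = 0 ∧
      ¬ LinearIndependent ℝ (fun i : Fin m => A i * V) := by
  set W := V * diagonal (fun k => √(d k))
  have hX : V * diagonal d * Vᵀ = W * Wᵀ :=
    V.mul_diagonal_mul_transpose_eq_of_nonneg fun k => (hd k).le
  have hcompl : (Wᵀ * adjA A lam * W).trace = 0 := by
    rw [trace_mul_cycle, ← hX, trace_mul_comm, trace_adjA_mul, hXF.2, ← hblam]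
    simp_rw [mul_comm]
  have hSW : adjA A lam * W = 0 := hlampsd.mul_eq_zero_of_trace_conjTranspose_mul_mul_eq_zero <| by
    rwa [conjTranspose_eq_transpose_of_trivial]
  have hSV : ∑ i, lam i • (A i * V) = 0 := by
    rw [← adjA_mul]
    exact mul_eq_zero_of_mul_mul_diagonal_eq_zero (fun k => (Real.sqrt_pos.2 (hd k)).ne') hSW
  refine ⟨hSV, fun hli => hlam0 ?_⟩
  simp [adjA, Fintype.linearIndependent_iff.mp hli lam hSV]

/-- if strict feasibility fails and `X = V D Vᵀ ∈ F` with `V` having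
orthonormal columns and `D ≻ 0` diagonal, then any solution `λ` of the auxiliary system
satisfies `∑ᵢ λᵢ Aᵢ V = 0`; in particular `A₁V, …, AₘV` are linearly dependent. -/
theorem stmt10 {n m r : ℕ} (A : Fin m → Matrix (Fin n) (Fin n) ℝ)
    (hA : ∀ i, (A i).IsSymm) (hLI : LinearIndependent ℝ A) (b : Fin m → ℝ)
    (hFne : (spectra A b).Nonempty)
    (hnostrict : ¬ ∃ X : Matrix (Fin n) (Fin n) ℝ, X.PosDef ∧ calA A X = b)
    (V : Matrix (Fin n) (Fin r) ℝ) (hV : Vᵀ * V = 1)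
    (d : Fin r → ℝ) (hd : ∀ i, 0 < d i)
    (hXF : V * Matrix.diagonal d * Vᵀ ∈ spectra A b)
    (lam : Fin m → ℝ) (hlam0 : adjA A lam ≠ 0)
    (hlampsd : (adjA A lam).PosSemidef) (hblam : ∑ i, b i * lam i = 0) :
    (∑ i, lam i • (A i * V)) = 0 ∧
      ¬ LinearIndependent ℝ (fun i : Fin m => A i * V) :=
  stmt10_general A b V d hd hXF lam hlam0 hlampsd hblam
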